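/- Let a ≥ 1, b ≥ 0 be integers with a + b ≥ 1, and let f = (f_1,f_2): C^2 → C^2 satisfy f_1(z,w) = z + z^{a+1}w^b·(c + ε_1(z,w)) and f_2(z,w) = w + z^a w^{b+1}·(d + ε_2(z,w)) with c, d nonzero and ε_i(0,0) = 0. Setting u = z^a w^b, along orbits one has u_1 := z_1^a w_1^b = u + u^2·(ac + bd + ε(z,w)) where ε(0,0) = 0. -/

import Mathlib

/-!
Write `u = z^a w^b`. Both components of `f` factor: `z₁ = z (1 + u A)` and `w₁ = w (1 + u B)` with
`A = c + ε₁`, `B = d + ε₂`, so `u₁ = u (1 + u A)^a (1 + u B)^b`. Expanding each factor to first order,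
`(1 + x)^n = 1 + n x + x² Rₙ(x)` with a polynomial remainder `Rₙ`, gives
`u₁ = u + u² (a A + b B + u S)` with `S` analytic, and `a A + b B = a c + b d + (a ε₁ + b ε₂)`.
-/

section Algebra

variable {R : Type*} [CommRing R]

def binomTail : ℕ → R → R
  | 0, _ => 0
  | n + 1, x => n + binomTail n x + x * binomTail n x

theorem one_add_pow_eq_binomTail (n : ℕ) (x : R) :
    (1 + x) ^ n = 1 + n * x + x ^ 2 * binomTail n x := by
  induction n with
  | zero => simp [binomTail]
  | succ n ih =>
    rw [pow_succ, ih, binomTail]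
    push_cast
    ring

def monomialTail (a b : ℕ) (u A B : R) : R :=
  a * b * A * B + A ^ 2 * binomTail a (u * A) * (1 + u * B) ^ b +
    B ^ 2 * binomTail b (u * B) * (1 + a * u * A)

theorem one_add_mul_pow_mul_one_add_mul_pow (a b : ℕ) (u A B : R) :
    (1 + u * A) ^ a * (1 + u * B) ^ b =
      1 + u * (a * A + b * B) + u ^ 2 * monomialTail a b u A B := by
  have hb := one_add_pow_eq_binomTail b (u * B)
  rw [one_add_pow_eq_binomTail a (u * A), monomialTail, add_mul, hb]
  ring

theorem monomial_comp_eq (a b : ℕ) (z w A B : R) :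
    (z + z ^ (a + 1) * w ^ b * A) ^ a * (w + z ^ a * w ^ (b + 1) * B) ^ b =
      z ^ a * w ^ b + (z ^ a * w ^ b) ^ 2 *
        (a * A + b * B + z ^ a * w ^ b * monomialTail a b (z ^ a * w ^ b) A B) := by
  have hz : z + z ^ (a + 1) * w ^ b * A = z * (1 + z ^ a * w ^ b * A) := by ring
  have hw : w + z ^ a * w ^ (b + 1) * B = w * (1 + z ^ a * w ^ b * B) := by ring
  rw [hz, hw, mul_pow, mul_pow, mul_mul_mul_comm, one_add_mul_pow_mul_one_add_mul_pow]
  ring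

end Algebra

section Analytic

variable {𝕜 E : Type*} [NontriviallyNormedField 𝕜] [NormedAddCommGroup E] [NormedSpace 𝕜 E]

theorem analyticAt_binomTail (n : ℕ) (x : 𝕜) : AnalyticAt 𝕜 (binomTail n) x := by
  induction n with
  | zero => exact analyticAt_const
  | succ n ih =>
    change AnalyticAt 𝕜 (fun y => (n : 𝕜) + binomTail n y + y * binomTail n y) x
    fun_prop

theorem AnalyticAt.monomialTail (a b : ℕ) {u A B : E → 𝕜} {x : E} (hu : AnalyticAt 𝕜 u x)
    (hA : AnalyticAt 𝕜 A x) (hB : AnalyticAt 𝕜 B x) :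
    AnalyticAt 𝕜 (fun p => _root_.monomialTail a b (u p) (A p) (B p)) x := by
  have hTa := (analyticAt_binomTail a _).comp (hu.mul hA)
  have hTb := (analyticAt_binomTail b _).comp (hu.mul hB)
  simp only [Function.comp_def] at hTa hTb
  unfold _root_.monomialTail
  fun_prop

end Analytic

theorem stmt17_general (a b : ℕ) (hab : 1 ≤ a + b) (c d : ℂ)
    (ε₁ ε₂ : ℂ × ℂ → ℂ)
    (hε₁ : AnalyticAt ℂ ε₁ (0, 0)) (hε₂ : AnalyticAt ℂ ε₂ (0, 0))
    (hε₁0 : ε₁ (0, 0) = 0) (hε₂0 : ε₂ (0, 0) = 0) :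
    ∃ ε : ℂ × ℂ → ℂ, AnalyticAt ℂ ε (0, 0) ∧ ε (0, 0) = 0 ∧
      ∀ᶠ p : ℂ × ℂ in nhds (0, 0),
        (p.1 + p.1 ^ (a + 1) * p.2 ^ b * (c + ε₁ p)) ^ a *
            (p.2 + p.1 ^ a * p.2 ^ (b + 1) * (d + ε₂ p)) ^ b =
          p.1 ^ a * p.2 ^ b +
            (p.1 ^ a * p.2 ^ b) ^ 2 * ((a * c + b * d) + ε p) := by
  set u : ℂ × ℂ → ℂ := fun p => p.1 ^ a * p.2 ^ b
  have hu : AnalyticAt ℂ u (0, 0) := (analyticAt_fst.pow a).mul (analyticAt_snd.pow b)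
  have hu0 : u (0, 0) = 0 := by
    simp only [u, mul_eq_zero, pow_eq_zero_iff', ne_eq, true_and]
    omega
  refine ⟨fun p => a * ε₁ p + b * ε₂ p + u p * monomialTail a b (u p) (c + ε₁ p) (d + ε₂ p),
    ?_, by simp [hu0, hε₁0, hε₂0], .of_forall fun p => ?_⟩
  · have hA : AnalyticAt ℂ (fun p => c + ε₁ p) (0, 0) := by fun_prop
    have hB : AnalyticAt ℂ (fun p => d + ε₂ p) (0, 0) := by fun_prop
    have hS := hu.monomialTail a b hA hB
    fun_prop
  · rw [monomial_comp_eq]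
    ring

/-- For integers `a ≥ 1`, `b ≥ 0` (so `a + b ≥ 1`) and
`f₁(z,w) = z + z^{a+1}w^b(c + ε₁)`, `f₂(z,w) = w + z^a w^{b+1}(d + ε₂)` with `c, d ≠ 0`
and `ε₁, ε₂` analytic vanishing at the origin, the monomial `u = z^a w^b` transforms as
`u₁ = z₁^a w₁^b = u + u²(ac + bd + ε(z,w))` with `ε` analytic and `ε(0,0) = 0`. -/
theorem stmt17 (a b : ℕ) (ha : 1 ≤ a) (hab : 1 ≤ a + b) (c d : ℂ) (hc : c ≠ 0) (hd : d ≠ 0)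
    (ε₁ ε₂ : ℂ × ℂ → ℂ)
    (hε₁ : AnalyticAt ℂ ε₁ (0, 0)) (hε₂ : AnalyticAt ℂ ε₂ (0, 0))
    (hε₁0 : ε₁ (0, 0) = 0) (hε₂0 : ε₂ (0, 0) = 0) :
    ∃ ε : ℂ × ℂ → ℂ, AnalyticAt ℂ ε (0, 0) ∧ ε (0, 0) = 0 ∧
      ∀ᶠ p : ℂ × ℂ in nhds (0, 0),
        (p.1 + p.1 ^ (a + 1) * p.2 ^ b * (c + ε₁ p)) ^ a *
            (p.2 + p.1 ^ a * p.2 ^ (b + 1) * (d + ε₂ p)) ^ b =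
          p.1 ^ a * p.2 ^ b +
            (p.1 ^ a * p.2 ^ b) ^ 2 * ((a * c + b * d) + ε p) :=
  stmt17_general a b hab c d ε₁ ε₂ hε₁ hε₂ hε₁0 hε₂0
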